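/- arXiv:1508.01138 — 2 statements merged into one kernel-verified Lean document; each statement's English description precedes it below -/
import Mathlib

section
/- Let f(t) be a symmetric Laurent polynomial with f(1) = 1 and let k be an integer with 1 ≤ k < deg f. Then t₀(f(t)·T_k) = k·a₀(f) + Σᵢ₌₁^k 2k·aᵢ(f) + Σᵢ₌ₖ₊₁^{deg f} 2i·aᵢ(f), where T_k = t^k + t^{-k}. -/
open LaurentPolynomial Finset

/-- Coefficient-wise symmetric Laurent polynomial: f(t) = f(t⁻¹). -/
def SymmL (f : LaurentPolynomial ℤ) : Prop := ∀ n : ℤ, f.coeff (-n) = f.coeff n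

/-- t₀(f) = ∑_{i ≥ 1} i · aᵢ(f), where aᵢ(f) is the coefficient of tⁱ + t⁻ⁱ. -/
noncomputable def t0 (f : LaurentPolynomial ℤ) : ℤ :=
  ∑ n ∈ f.coeff.support.filter (fun n => 0 < n), n * f.coeff n

/-- Evaluation at t = 1 (the sum of all coefficients). -/
noncomputable def evalOne (f : LaurentPolynomial ℤ) : ℤ := ∑ n ∈ f.coeff.support, f.coeff n

/-- The degree of a symmetric Laurent polynomial: the largest exponent in its support. -/
noncomputable def symDeg (f : LaurentPolynomial ℤ) : ℕ := f.coeff.support.sup Int.toNat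

/-!
Multiplying `tⁱ + t⁻ⁱ` by `T_k = tᵏ + t⁻ᵏ` gives `(t^{i+k} + t^{-(i+k)}) + (t^{i-k} + t^{-(i-k)})`,
which contributes `(i + k) + |i - k| = 2 max(i, k)` to `t₀`, while `a₀ T_k` contributes `k`.
Hence `t₀(f T_k) = k a₀ + ∑ᵢ 2 max(i, k) aᵢ`, and splitting the sum at `i = k` gives the formula.
In the proof `t₀` is the sum of the coefficients weighted by `max n 0`; multiplying by `tᵏ`
shifts the weights, and the symmetry of `f` folds the negative exponents onto the positive ones.
-/

namespace LaurentPolynomial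

variable {R : Type*}

theorem coeff_mul_T [Semiring R] (f : R[T;T⁻¹]) (k : ℤ) :
    (f * T k).coeff = f.coeff.equivMapDomain (Equiv.addRight k) := by
  ext n
  rw [T, AddMonoidAlgebra.coeff_mul_single_apply, mul_one, Finsupp.equivMapDomain_apply]
  rfl

theorem sum_coeff_mul_T_add_T_neg [Ring R] (f : R[T;T⁻¹]) (k : ℤ) (w : ℤ → R) :
    (f * (T k + T (-k))).coeff.sum (fun n c => w n * c) =
      f.coeff.sum fun n c => (w (n + k) + w (n - k)) * c := by
  rw [mul_add, AddMonoidAlgebra.coeff_add,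
    Finsupp.sum_add_index' (fun _ => mul_zero _) (fun _ _ _ => mul_add _ _ _),
    coeff_mul_T, coeff_mul_T, Finsupp.sum_equivMapDomain, Finsupp.sum_equivMapDomain,
    ← Finsupp.sum_add]
  simp only [Equiv.coe_addRight, add_mul, sub_eq_add_neg]

end LaurentPolynomial

theorem Finset.sum_Icc_neg_self {M : Type*} [AddCommMonoid M] (F : ℤ → M) {N : ℤ} (hN : 0 ≤ N) :
    ∑ n ∈ Icc (-N) N, F n = F 0 + ∑ i ∈ Icc 1 N, (F i + F (-i)) := by
  have hsplit : Icc (-N) N = insert 0 (Icc 1 N ∪ (Icc 1 N).map (Equiv.neg ℤ).toEmbedding) := by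
    ext n
    simp only [mem_Icc, mem_insert, mem_union, mem_map_equiv, Equiv.neg_symm, Equiv.neg_apply]
    omega
  have hdisj : Disjoint (Icc 1 N) ((Icc 1 N).map (Equiv.neg ℤ).toEmbedding) := by
    simp only [disjoint_left, mem_Icc, mem_map_equiv, Equiv.neg_symm, Equiv.neg_apply]
    omega
  rw [hsplit, sum_insert (by simp), sum_union hdisj, sum_map, sum_add_distrib]
  rfl

theorem t0_eq_sum (f : ℤ[T;T⁻¹]) : t0 f = f.coeff.sum fun n c => max n 0 * c := by
  rw [t0, sum_filter, Finsupp.sum]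
  refine sum_congr rfl fun n _ => ?_
  split_ifs with hn
  · rw [max_eq_left hn.le]
  · rw [max_eq_right (not_lt.1 hn), zero_mul]

namespace SymmL

variable {f : ℤ[T;T⁻¹]}

theorem support_subset_Icc (hf : SymmL f) : f.coeff.support ⊆ Icc (-(symDeg f : ℤ)) (symDeg f) := by
  have hle : ∀ n ∈ f.coeff.support, n ≤ symDeg f := fun n hn => by
    have := le_sup (f := Int.toNat) hn
    rw [← symDeg] at this
    omega
  intro n hn
  have hneg : -n ∈ f.coeff.support := by
    rwa [Finsupp.mem_support_iff, hf, ← Finsupp.mem_support_iff]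
  have := hle n hn
  have := hle (-n) hneg
  rw [mem_Icc]
  omega

theorem sum_coeff (hf : SymmL f) (w : ℤ → ℤ) :
    f.coeff.sum (fun n c => w n * c) =
      w 0 * f.coeff 0 + ∑ i ∈ Icc 1 (symDeg f : ℤ), (w i + w (-i)) * f.coeff i := by
  rw [Finsupp.sum_of_support_subset _ hf.support_subset_Icc _ (fun _ _ => mul_zero _),
    sum_Icc_neg_self _ (Int.natCast_nonneg _)]
  refine congrArg _ (sum_congr rfl fun i _ => ?_)
  rw [hf, add_mul]

theorem t0_mul_T_add_T_neg (hf : SymmL f) {k : ℤ} (hk : 0 ≤ k) :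
    t0 (f * (T k + T (-k))) =
      k * f.coeff 0 + ∑ i ∈ Icc 1 (symDeg f : ℤ), 2 * max i k * f.coeff i := by
  rw [t0_eq_sum, sum_coeff_mul_T_add_T_neg, hf.sum_coeff]
  congr 1
  · congr 1
    omega
  · refine sum_congr rfl fun i hi => ?_
    rw [mem_Icc] at hi
    congr 1
    omega

end SymmL

theorem t0_mul_Tk_of_lt_deg_general (f : LaurentPolynomial ℤ) (hf : SymmL f)
    (k : ℤ) (hk : 1 ≤ k) (hdeg : k < (symDeg f : ℤ)) :
    t0 (f * (T k + T (-k))) =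
      k * f.coeff 0 + (∑ i ∈ Finset.Icc 1 k, 2 * k * f.coeff i)
        + ∑ i ∈ Finset.Icc (k + 1) (symDeg f : ℤ), 2 * i * f.coeff i := by
  have hlow : (Icc 1 (symDeg f : ℤ)).filter (· ≤ k) = Icc 1 k := by
    ext i
    simp only [mem_filter, mem_Icc]
    omega
  have hhigh : (Icc 1 (symDeg f : ℤ)).filter (fun i => ¬i ≤ k) = Icc (k + 1) (symDeg f) := by
    ext i
    simp only [mem_filter, mem_Icc]
    omega
  rw [hf.t0_mul_T_add_T_neg (by omega), add_assoc, ← sum_filter_add_sum_filter_not _ (· ≤ k),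
    hlow, hhigh]
  congr 2 <;> refine sum_congr rfl fun i hi => ?_ <;> rw [mem_Icc] at hi
  · rw [max_eq_right hi.2]
  · rw [max_eq_left (by omega)]

/-- if f is symmetric, f(1) = 1 and 1 ≤ k < deg f, then
t₀(f · (tᵏ + t⁻ᵏ)) = k·a₀(f) + ∑_{i=1}^{k} 2k·aᵢ(f) + ∑_{i=k+1}^{deg f} 2i·aᵢ(f). -/
theorem t0_mul_Tk_of_lt_deg (f : LaurentPolynomial ℤ) (hf : SymmL f)
    (h1 : evalOne f = 1) (k : ℤ) (hk : 1 ≤ k) (hdeg : k < (symDeg f : ℤ)) :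
    t0 (f * (T k + T (-k))) =
      k * f.coeff 0 + (∑ i ∈ Finset.Icc 1 k, 2 * k * f.coeff i)
        + ∑ i ∈ Finset.Icc (k + 1) (symDeg f : ℤ), 2 * i * f.coeff i :=
  t0_mul_Tk_of_lt_deg_general f hf k hk hdeg
end

section
/- Let f and g be symmetric Laurent polynomials over ℤ with f(1) = g(1) = 1. Suppose r > 2·deg f and r > 2·deg g, and let A_r(t) := (-1)^r(1 + Σ_{k=1}^r (-1)^k(t^k + t^{-k})). Then t₀(f(t²)·A_r(t)) = t₀(g(t²)·A_r(t)); i.e., the value of t₀ of such a product is independent of the choice of the symmetric polynomial with value 1 at t = 1. -/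
open LaurentPolynomial Finset

/-- Substitution t ↦ t²: the coefficient of t^{2n} in `sub2 f` is the coefficient
of tⁿ in f. -/
noncomputable def sub2 (f : LaurentPolynomial ℤ) : LaurentPolynomial ℤ :=
  AddMonoidAlgebra.ofCoeff (Finsupp.mapDomain (fun n => 2 * n) f.coeff)

/-- The normalized Alexander polynomial of the (2, 2r+1) torus knot,
A_r(t) = (-1)^r (1 + ∑_{k=1}^r (-1)ᵏ(tᵏ + t⁻ᵏ)). -/
noncomputable def Ar (r : ℕ) : LaurentPolynomial ℤ :=
  (-1) ^ r * (1 + ∑ k ∈ Finset.Icc 1 r, (-1 : LaurentPolynomial ℤ) ^ k * (T (k : ℤ) + T (-(k : ℤ))))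

/-! For every symmetric `f` with `f(1) = 1` and `2 deg f ≤ r`, `t₀(f(t²) A_r(t)) = ⌊(r + 1)/2⌋`.
Since `t₀` is additive, `t₀(f(t²) A_r) = ∑ⱼ aⱼ(f) t₀(t^{2j} A_r)`. For `2|j| ≤ r` the positive-degree
part of `t^{2j} A_r` is the alternating sequence `±(-1)ⁿ`, `1 ≤ n ≤ 2j + r`, so
`t₀(t^{2j} A_r) = j + ⌊(r + 1)/2⌋`. Summing against the coefficients of `f`, symmetry kills
`∑ⱼ j aⱼ(f)` and `f(1) = 1` leaves `⌊(r + 1)/2⌋`. -/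

lemma coeff_T (n m : ℤ) : (T n : LaurentPolynomial ℤ).coeff m = if n = m then 1 else 0 := by
  rw [T, AddMonoidAlgebra.coeff_single, Finsupp.single_apply]

lemma Ar_succ (r : ℕ) : Ar (r + 1) = -Ar r + (T (r + 1 : ℕ) + T (-((r + 1 : ℕ) : ℤ))) := by
  have hsq : ((-1 : LaurentPolynomial ℤ) ^ r) ^ 2 = 1 := by
    rw [← pow_mul, pow_mul']; simp
  rw [Ar, Ar, Finset.sum_Icc_succ_top (by omega)]
  linear_combination (T ((r + 1 : ℕ) : ℤ) + T (-((r + 1 : ℕ) : ℤ))) * hsq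

lemma coeff_Ar (r : ℕ) (m : ℤ) :
    (Ar r).coeff m = if m.natAbs ≤ r then (((r : ℤ) + m).negOnePow : ℤ) else 0 := by
  induction r with
  | zero =>
    rw [Ar, pow_zero, Finset.Icc_eq_empty (by omega), Finset.sum_empty, add_zero, one_mul,
      ← T_zero, coeff_T]
    by_cases hm : m = 0 <;> simp [hm, eq_comm]
  | succ r ih =>
    rw [Ar_succ]
    simp only [AddMonoidAlgebra.coeff_add, AddMonoidAlgebra.coeff_neg, Finsupp.add_apply,
      Finsupp.neg_apply, ih, coeff_T]
    push_cast
    split_ifs <;> first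
      | omega
      | (rw [add_right_comm, Int.negOnePow_succ]; simp; done)
      | (subst m; rw [← two_mul, Int.negOnePow_two_mul]; simp)
      | (subst m; simp)

lemma coeff_T_mul (m n : ℤ) (q : LaurentPolynomial ℤ) : (T m * q).coeff n = q.coeff (n - m) := by
  rw [T, AddMonoidAlgebra.coeff_single_mul_apply, one_mul, neg_add_eq_sub]

lemma t0_add (p q : LaurentPolynomial ℤ) : t0 (p + q) = t0 p + t0 q := by
  have t0_eq_finsuppSum : ∀ h : LaurentPolynomial ℤ, t0 h = h.coeff.sum fun n a => if 0 < n then n * a else 0 :=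
    fun h => by rw [t0, Finsupp.sum, Finset.sum_filter]
  simp only [t0_eq_finsuppSum, AddMonoidAlgebra.coeff_add]
  exact Finsupp.sum_add_index' (by simp) fun n a b => by split_ifs <;> ring

noncomputable def t0AddMonoidHom : LaurentPolynomial ℤ →+ ℤ := AddMonoidHom.mk' t0 t0_add

lemma t0_eq_sum_Icc (h : LaurentPolynomial ℤ) (N : ℤ) (hN : ∀ n, N < n → h.coeff n = 0) :
    t0 h = ∑ n ∈ Icc 1 N, n * h.coeff n := by
  refine Finset.sum_subset (fun n hn => ?_) (fun n hn hn' => ?_)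
  · rw [Finset.mem_filter, Finsupp.mem_support_iff] at hn
    have := mt (hN n) hn.1
    exact Finset.mem_Icc.2 ⟨hn.2, by omega⟩
  · rw [Finset.mem_filter, Finsupp.mem_support_iff, not_and_or, not_not] at hn'
    rw [Finset.mem_Icc] at hn
    rcases hn' with h0 | hneg
    · rw [h0, mul_zero]
    · omega

lemma sub2_eq_sum (f : LaurentPolynomial ℤ) :
    sub2 f = ∑ j ∈ f.coeff.support, f.coeff j • T (2 * j) := by
  rw [sub2, Finsupp.mapDomain, Finsupp.sum, AddMonoidAlgebra.ofCoeff_sum]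
  refine Finset.sum_congr rfl fun j _ => ?_
  rw [smul_eq_C_mul, ← single_eq_C_mul_T]
  rfl

lemma t0_sub2_mul (f q : LaurentPolynomial ℤ) :
    t0 (sub2 f * q) = ∑ j ∈ f.coeff.support, f.coeff j * t0 (T (2 * j) * q) := by
  simp only [sub2_eq_sum, Finset.sum_mul, smul_mul_assoc]
  exact (map_sum t0AddMonoidHom _ _).trans
    (Finset.sum_congr rfl fun j _ => map_zsmul t0AddMonoidHom _ _)

lemma sum_Icc_mul_negOnePow (N : ℕ) :
    ∑ n ∈ Icc (1 : ℤ) N, n * (n.negOnePow : ℤ) = ((N : ℤ).negOnePow : ℤ) * ((N + 1) / 2) := by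
  induction N with
  | zero => simp
  | succ N ih =>
    push_cast
    rw [← Finset.insert_Icc_right_eq_Icc_add_one (by omega), Finset.sum_insert (by simp), ih,
      Int.negOnePow_succ, Units.val_neg]
    rcases Int.even_or_odd (N : ℤ) with ⟨c, hc⟩ | ⟨c, hc⟩
    · simp only [Int.negOnePow_even _ ⟨c, hc⟩, Units.val_one]
      omega
    · simp only [Int.negOnePow_odd _ ⟨c, hc⟩, Units.val_neg, Units.val_one]
      omega

lemma t0_T_two_mul_mul_Ar (r : ℕ) (j : ℤ) (hj : 2 * j.natAbs ≤ r) :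
    t0 (T (2 * j) * Ar r) = j + (r + 1) / 2 := by
  obtain ⟨N, hN⟩ : ∃ N : ℕ, (N : ℤ) = 2 * j + r := ⟨(2 * j + r).toNat, by omega⟩
  rw [t0_eq_sum_Icc _ N fun n hn => by rw [coeff_T_mul, coeff_Ar, if_neg (by omega)]]
  have hterm : ∀ n ∈ Icc (1 : ℤ) N,
      n * (T (2 * j) * Ar r).coeff n = ((r : ℤ).negOnePow : ℤ) * (n * (n.negOnePow : ℤ)) := by
    intro n hn
    rw [Finset.mem_Icc] at hn
    rw [coeff_T_mul, coeff_Ar, if_pos (by omega), add_sub_left_comm, Int.negOnePow_add,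
      Int.negOnePow_sub, Int.negOnePow_two_mul]
    push_cast
    ring
  rw [Finset.sum_congr rfl hterm, ← Finset.mul_sum, sum_Icc_mul_negOnePow, hN, Int.negOnePow_add,
    Int.negOnePow_two_mul, one_mul, ← mul_assoc, ← Units.val_mul, ← Int.negOnePow_add,
    ← two_mul, Int.negOnePow_two_mul, Units.val_one, one_mul]
  omega

lemma natAbs_le_symDeg {f : LaurentPolynomial ℤ} (hf : SymmL f) {j : ℤ}
    (hj : j ∈ f.coeff.support) : j.natAbs ≤ symDeg f := by
  have hneg : -j ∈ f.coeff.support := by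
    rw [Finsupp.mem_support_iff, hf j]
    exact Finsupp.mem_support_iff.1 hj
  have := Finset.le_sup (f := Int.toNat) hj
  have := Finset.le_sup (f := Int.toNat) hneg
  rw [symDeg]
  omega

lemma sum_coeff_mul_self_eq_zero {f : LaurentPolynomial ℤ} (hf : SymmL f) :
    ∑ j ∈ f.coeff.support, f.coeff j * j = 0 := by
  refine Finset.sum_involution (fun j _ => -j) (fun j _ => by rw [hf j]; ring)
    (fun j _ hne hfix => hne (by rw [show j = 0 by omega, mul_zero])) (fun j hj => ?_)
    (fun j _ => neg_neg j)
  rw [Finsupp.mem_support_iff, hf j]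
  exact Finsupp.mem_support_iff.1 hj

lemma t0_sub2_mul_Ar {f : LaurentPolynomial ℤ} (hf : SymmL f) (hf1 : evalOne f = 1) {r : ℕ}
    (hr : 2 * symDeg f ≤ r) : t0 (sub2 f * Ar r) = (r + 1) / 2 := by
  rw [t0_sub2_mul]
  calc ∑ j ∈ f.coeff.support, f.coeff j * t0 (T (2 * j) * Ar r)
      = ∑ j ∈ f.coeff.support, (f.coeff j * j + f.coeff j * ((r + 1) / 2)) :=
        Finset.sum_congr rfl fun j hj => by
          rw [t0_T_two_mul_mul_Ar r j (by have := natAbs_le_symDeg hf hj; omega), mul_add]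
    _ = (r + 1) / 2 := by
        rw [Finset.sum_add_distrib, sum_coeff_mul_self_eq_zero hf, ← Finset.sum_mul,
          ← evalOne, hf1, zero_add, one_mul]

/-- for f, g symmetric with f(1) = g(1) = 1 and r > 2·deg f, r > 2·deg g,
t₀(f(t²)·A_r(t)) = t₀(g(t²)·A_r(t)). -/
theorem t0_sub2_mul_Ar_indep (f g : LaurentPolynomial ℤ) (hf : SymmL f) (hg : SymmL g)
    (hf1 : evalOne f = 1) (hg1 : evalOne g = 1) (r : ℕ)
    (hrf : 2 * symDeg f < r) (hrg : 2 * symDeg g < r) :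
    t0 (sub2 f * Ar r) = t0 (sub2 g * Ar r) := by
  rw [t0_sub2_mul_Ar hf hf1 hrf.le, t0_sub2_mul_Ar hg hg1 hrg.le]
end
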